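/- arXiv:1806.03207 — 3 statements merged into one kernel-verified Lean document; each statement's English description precedes it below -/
import Mathlib

section
/- Let f : ℝ → ℝ have a power series expansion at a point x with Taylor coefficients r_i = f^{(i)}(x)/i!, and let φ : ℝ → ℝ have a power series expansion at v = f(x) with Taylor coefficients q_i = φ^{(i)}(v)/i!. Let R = Σ_{i≥1} r_i X^i and Q = Σ_{i≥1} q_i X^i be the associated formal power series with zero constant term. Then the composition φ ∘ f has a power series expansion at x; its 0-th Taylor coefficient equals φ(v), and for every n ≥ 1 its n-th Taylor coefficient (φ∘f)^{(n)}(x)/n! equals the coefficient of X^n in the formal substitution Q(R(X)). -/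
open scoped Nat
open Finset

/-- Coefficient of `X^n` in the formal substitution `Q(R(X))`, where `R` is assumed to
have zero constant term (so only powers `R^i` with `i ≤ n` contribute to coefficient `n`). -/
noncomputable def substCoeff (Q R : PowerSeries ℝ) (n : ℕ) : ℝ :=
  PowerSeries.coeff (R := ℝ) n (∑ i ∈ Finset.range (n + 1), PowerSeries.coeff (R := ℝ) i Q • R ^ i)

private lemma list_sum_range_map {M : Type*} [AddCommMonoid M] (f : ℕ → M) (k : ℕ) :
    ((List.range k).map f).sum = ∑ j ∈ Finset.range k, f j := by
  induction k with
  | zero => simp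
  | succ k ih =>
      rw [List.range_succ, List.map_append, List.sum_append, Finset.sum_range_succ, ih]
      simp

private lemma coeff_eq_iteratedDeriv {f : ℝ → ℝ} {x : ℝ} {p : FormalMultilinearSeries ℝ ℝ ℝ}
    (hp : HasFPowerSeriesAt f p x) (n : ℕ) :
    p.coeff n = iteratedDeriv n f x / (n ! : ℝ) := by
  obtain ⟨r, hr⟩ := hp
  have h := hr.factorial_smul (1 : ℝ) n
  rw [iteratedDeriv_eq_iteratedFDeriv]
  have h2 : (iteratedFDeriv ℝ n f x : (Fin n → ℝ) → ℝ) (fun _ => 1) = n ! • p n (fun _ => 1) :=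
    h.symm
  rw [h2, nsmul_eq_mul]
  have hne : (n ! : ℝ) ≠ 0 := by exact_mod_cast n.factorial_ne_zero
  rw [FormalMultilinearSeries.coeff]
  rw [mul_div_cancel_left₀ _ hne]
  rfl

private lemma coeff_comp_eq (q p : FormalMultilinearSeries ℝ ℝ ℝ) (n : ℕ) :
    (q.comp p).coeff n = ∑ c : Composition n,
      (∏ j, p.coeff (c.blocksFun j)) * q.coeff c.length := by
  rw [FormalMultilinearSeries.coeff]
  show (∑ c : Composition n, q.compAlongComposition p c) (fun _ => 1) = _
  rw [ContinuousMultilinearMap.sum_apply]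
  refine Finset.sum_congr rfl fun c _ => ?_
  rw [FormalMultilinearSeries.compAlongComposition_apply,
    FormalMultilinearSeries.apply_eq_prod_smul_coeff, smul_eq_mul]
  congr 1

open scoped Classical in
private lemma sum_coeff_pow_eq (R : PowerSeries ℝ) (hR0 : PowerSeries.coeff (R := ℝ) 0 R = 0)
    (g : ℕ → ℝ) (n : ℕ) :
    ∑ i ∈ Finset.range (n + 1), g i * PowerSeries.coeff (R := ℝ) n (R ^ i) =
      ∑ c : Composition n, g c.length * ∏ j, PowerSeries.coeff (R := ℝ) (c.blocksFun j) R := by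
  have step1 : ∀ i ∈ Finset.range (n + 1), g i * PowerSeries.coeff (R := ℝ) n (R ^ i) =
      ∑ l ∈ finsuppAntidiag (range i) n, g i * ∏ j ∈ range i, PowerSeries.coeff (R := ℝ) (l j) R := by
    intro i _
    rw [PowerSeries.coeff_pow, Finset.mul_sum]
  rw [Finset.sum_congr rfl step1, Finset.sum_sigma']
  set P : (Σ _ : ℕ, ℕ →₀ ℕ) → Prop := fun x => ∀ j ∈ range x.1, x.2 j ≠ 0 with hP
  rw [← Finset.sum_filter_of_ne (p := P) (fun x hx hne => ?_)]
  swap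
  · intro j hj hj0
    apply hne
    rw [Finset.prod_eq_zero hj (by rw [hj0]; exact hR0), mul_zero]
  refine Finset.sum_bij'
    (i := fun (x : Σ _ : ℕ, ℕ →₀ ℕ) (hx : x ∈ _) =>
      (⟨(List.range x.1).map x.2, ?_, ?_⟩ : Composition n))
    (j := fun (c : Composition n) _ => (⟨c.length, c.blocks.toFinsupp⟩ : Σ _ : ℕ, ℕ →₀ ℕ))
    ?_ ?_ ?_ ?_ ?_
  · intro k hk
    simp only [List.mem_map, List.mem_range] at hk
    obtain ⟨j, hj, rfl⟩ := hk
    simp only [Finset.mem_filter, hP] at hx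
    exact Nat.pos_of_ne_zero (hx.2 j (Finset.mem_range.2 hj))
  · simp only [Finset.mem_filter, Finset.mem_sigma, Finset.mem_finsuppAntidiag] at hx
    rw [list_sum_range_map]
    exact hx.1.2.1
  · intro x hx
    exact Finset.mem_univ _
  · intro c _
    simp only [Finset.mem_filter, Finset.mem_sigma, Finset.mem_finsuppAntidiag]
    refine ⟨⟨Finset.mem_range.2 (Nat.lt_succ_of_le c.length_le), ?_, ?_⟩, ?_⟩
    · have : ∀ j ∈ range c.length, c.blocks.toFinsupp j = c.blocks.getD j 0 := by
        intro j _; exact List.toFinsupp_apply _ _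
      rw [Finset.sum_congr rfl this]
      rw [← list_sum_range_map (fun j => c.blocks.getD j 0) c.length]
      have : (List.range c.length).map (fun j => c.blocks.getD j 0) = c.blocks := by
        apply List.ext_getElem
        · simp [c.blocks_length]
        · intro i h1 h2
          simp only [List.getElem_map, List.getElem_range]
          rw [List.getD_eq_getElem]
      rw [this, c.blocks_sum]
    · intro j hj
      rw [List.toFinsupp_support] at hj
      simp only [Finset.mem_filter, Finset.mem_range] at hj
      exact Finset.mem_range.2 (lt_of_lt_of_le hj.1 (le_of_eq c.blocks_length))
    · intro j hj
      rw [Finset.mem_range] at hj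
      have hj' : j < c.blocks.length := by rwa [c.blocks_length]
      rw [List.toFinsupp_apply, List.getD_eq_getElem _ _ hj']
      exact (c.blocks_pos (List.getElem_mem hj')).ne'
  · intro x hx
    simp only [Finset.mem_filter, Finset.mem_sigma, Finset.mem_finsuppAntidiag] at hx
    have hlen : ((List.range x.1).map x.2).length = x.1 := by simp
    refine Sigma.ext ?_ ?_
    · simp [Composition.length]
    · simp only
      refine heq_of_eq (Finsupp.ext fun j => ?_)
      by_cases hj : j < x.1
      · rw [List.toFinsupp_apply, List.getD_eq_getElem _ _ (by simpa using hj)]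
        simp
      · rw [List.toFinsupp_apply, List.getD_eq_default _ _ (by simpa using hj)]
        by_contra hne
        have : j ∈ x.2.support := Finsupp.mem_support_iff.2 fun h => hne h.symm
        exact hj (Finset.mem_range.1 (hx.1.2.2 this))
  · intro c _
    apply Composition.ext
    simp only
    apply List.ext_getElem
    · simp [c.blocks_length]
    · intro i h1 h2
      simp only [List.getElem_map, List.getElem_range]
      rw [List.toFinsupp_apply, List.getD_eq_getElem _ _ (by simpa [c.blocks_length] using
        (by simpa using h1 : i < c.length))]
  · intro x hx
    have hlen : ((List.range x.1).map x.2).length = x.1 := by simp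
    congr 1
    · rw [Composition.length]; simp
    · rw [Finset.prod_range (fun j => PowerSeries.coeff (R := ℝ) (x.2 j) R)]
      refine Fintype.prod_equiv (finCongr hlen.symm) _ _ fun j => ?_
      congr 1
      simp [Composition.blocksFun]

/-- If `f` is analytic at `x` and `phi` is analytic at `v = f x`, then `phi ∘ f` is analytic
at `x`; its 0th Taylor coefficient is `phi v`, and for `n ≥ 1` its `n`-th Taylor coefficient
is the coefficient of `X^n` in the formal substitution `Q(R(X))` of the (constant-term-free)
Taylor series of `f` at `x` into that of `phi` at `v`. -/
theorem taylor_coeff_comp (f phi : ℝ → ℝ) (x : ℝ)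
    (hf : AnalyticAt ℝ f x) (hphi : AnalyticAt ℝ phi (f x))
    (R Q : PowerSeries ℝ)
    (hR : ∀ i, PowerSeries.coeff (R := ℝ) i R =
      if i = 0 then 0 else iteratedDeriv i f x / (i ! : ℝ))
    (hQ : ∀ i, PowerSeries.coeff (R := ℝ) i Q =
      if i = 0 then 0 else iteratedDeriv i phi (f x) / (i ! : ℝ)) :
    AnalyticAt ℝ (phi ∘ f) x ∧
    iteratedDeriv 0 (phi ∘ f) x = phi (f x) ∧
    ∀ n : ℕ, 1 ≤ n → iteratedDeriv n (phi ∘ f) x / (n ! : ℝ) = substCoeff Q R n := by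
  obtain ⟨p, hp⟩ := hf
  obtain ⟨q, hq⟩ := hphi
  have hcomp : HasFPowerSeriesAt (phi ∘ f) (q.comp p) x := hq.comp hp
  refine ⟨⟨q.comp p, hcomp⟩, by simp [iteratedDeriv_zero], fun n hn => ?_⟩
  rw [← coeff_eq_iteratedDeriv hcomp n, coeff_comp_eq, substCoeff, map_sum]
  have hs : ∀ i ∈ Finset.range (n + 1),
      PowerSeries.coeff (R := ℝ) n (PowerSeries.coeff (R := ℝ) i Q • R ^ i) =
        PowerSeries.coeff (R := ℝ) i Q * PowerSeries.coeff (R := ℝ) n (R ^ i) := by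
    intro i _
    rw [map_smul, smul_eq_mul]
  rw [Finset.sum_congr rfl hs,
    sum_coeff_pow_eq R (by rw [hR]; simp) (fun i => PowerSeries.coeff (R := ℝ) i Q) n]
  refine Finset.sum_congr rfl fun c _ => ?_
  have hlen : c.length ≠ 0 := (c.length_pos_of_pos hn).ne'
  rw [hQ, if_neg hlen, ← coeff_eq_iteratedDeriv hq, mul_comm]
  congr 1
  refine Finset.prod_congr rfl fun j _ => ?_
  rw [hR, if_neg (Nat.one_le_iff_ne_zero.mp (c.one_le_blocksFun j)),
    ← coeff_eq_iteratedDeriv hp]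
end

section
/- Let γ : ℕ → ℝ be a nonnegative summable sequence with PGF Γ(u) = Σ_{n=0}^∞ γ(n) u^n. Fix y ∈ ℕ and ρ ∈ (0, 1), and define α(n) = γ(n) · C(n, y) · ρ^y · (1−ρ)^{n−y} for n ≥ y and α(n) = 0 for n < y, where C(n, y) is the binomial coefficient. Then α is summable and for every s ∈ [0, 1]: Σ_{n=0}^∞ α(n) s^n = ((s·ρ)^y / y!) · Γ^{(y)}(s·(1−ρ)), where Γ^{(y)} denotes the y-th derivative of Γ. -/
/-!
Inside the unit disc the power series `Γ` may be differentiated termwise, so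
`Γ^{(y)}(x) = ∑ γ n · n.descFactorial y · x^{n-y}`. Since `n.descFactorial y = y! · C(n, y)` and
`sⁿ = sʸ · s^{n-y}`, this matches `∑ α(n) sⁿ` term by term at `x = s(1-ρ)`, the terms with `n < y`
vanishing on both sides. Summability of `α` follows from `0 ≤ α ≤ γ`, a binomial probability
being at most `1`.
-/

open scoped Nat
open Metric

section PowerSeries

variable {𝕜 : Type*} [RCLike 𝕜]

lemma summable_descFactorial_mul_pow_sub (k : ℕ) {r : ℝ} (hr : ‖r‖ < 1) :
    Summable fun n : ℕ => (n.descFactorial k : ℝ) * r ^ (n - k) :=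
  (summable_nat_add_iff k).mp <| by
    simpa using summable_descFactorial_mul_geometric_of_norm_lt_one k hr

lemma iteratedDerivWithin_const_mul_pow {s : Set 𝕜} (hs : IsOpen s) (a : 𝕜) (n k : ℕ)
    {z : 𝕜} (hz : z ∈ s) :
    iteratedDerivWithin k (fun w => a * w ^ n) s z = a * (n.descFactorial k * z ^ (n - k)) := by
  rw [iteratedDerivWithin_of_isOpen hs hz]
  simp

lemma norm_mul_descFactorial_mul_pow_le {a z : 𝕜} {C r : ℝ} (ha : ‖a‖ ≤ C) (hz : ‖z‖ ≤ r)
    (n k : ℕ) :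
    ‖a * (n.descFactorial k * z ^ (n - k))‖ ≤ C * (n.descFactorial k * r ^ (n - k)) := by
  rw [norm_mul, norm_mul, norm_pow, RCLike.norm_natCast]
  gcongr
  exact (norm_nonneg a).trans ha

lemma IsCompact.exists_norm_le_lt_one {K : Set 𝕜} (hK : IsCompact K) (hK1 : K ⊆ ball 0 1) :
    ∃ r : ℝ, ‖r‖ < 1 ∧ ∀ z ∈ K, ‖z‖ ≤ r := by
  obtain ⟨r, ⟨hr0, hr1⟩, hKr⟩ := exists_pos_lt_subset_ball one_pos hK.isClosed hK1
  refine ⟨r, by rwa [Real.norm_of_nonneg hr0.le], fun z hz => ?_⟩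
  simpa using (mem_ball_zero_iff.mp (hKr hz)).le

theorem iteratedDeriv_tsum_mul_pow {c : ℕ → 𝕜} {C : ℝ} (hc : ∀ n, ‖c n‖ ≤ C) (k : ℕ) {x : 𝕜}
    (hx : ‖x‖ < 1) :
    iteratedDeriv k (fun z => ∑' n, c n * z ^ n) x =
      ∑' n, c n * (n.descFactorial k * x ^ (n - k)) := by
  have hxs : x ∈ ball (0 : 𝕜) 1 := mem_ball_zero_iff.mpr hx
  rw [← iteratedDerivWithin_of_isOpen isOpen_ball hxs,
    iteratedDerivWithin_tsum k isOpen_ball hxs]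
  · exact tsum_congr fun n => iteratedDerivWithin_const_mul_pow isOpen_ball _ n k hxs
  · intro t ht
    have ht' : ‖‖t‖‖ < 1 := by simpa using ht
    refine Summable.of_norm_bounded ((summable_descFactorial_mul_pow_sub 0 ht').mul_left C)
      fun n => ?_
    simpa using norm_mul_descFactorial_mul_pow_le (hc n) le_rfl n 0
  · intro j _ _
    refine SummableLocallyUniformlyOn_of_locally_bounded isOpen_ball fun K hK hKc => ?_
    obtain ⟨r, hr, hKr⟩ := hKc.exists_norm_le_lt_one hK
    refine ⟨_, (summable_descFactorial_mul_pow_sub j hr).mul_left C, fun n z hz => ?_⟩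
    rw [iteratedDerivWithin_const_mul_pow isOpen_ball _ n j (hK hz)]
    exact norm_mul_descFactorial_mul_pow_le (hc n) (hKr z hz) n j
  · intro n j z _ hz
    have hpoly : ContDiffOn 𝕜 ⊤ (fun w : 𝕜 => c n * w ^ n) (ball 0 1) := by fun_prop
    exact (hpoly.differentiableOn_iteratedDerivWithin (WithTop.coe_lt_top _)
      isOpen_ball.uniqueDiffOn).differentiableAt (isOpen_ball.mem_nhds hz)

end PowerSeries

lemma choose_mul_pow_mul_one_sub_pow_le_one {p : ℝ} (hp0 : 0 ≤ p) (hp1 : p ≤ 1) (n k : ℕ) :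
    (n.choose k : ℝ) * p ^ k * (1 - p) ^ (n - k) ≤ 1 := by
  rcases lt_or_ge n k with hnk | hkn
  · simp [Nat.choose_eq_zero_of_lt hnk]
  have hq : 0 ≤ 1 - p := by linarith
  have hterms : ∀ m ∈ Finset.range (n + 1), 0 ≤ p ^ m * (1 - p) ^ (n - m) * (n.choose m : ℝ) :=
    fun m _ => by positivity
  calc (n.choose k : ℝ) * p ^ k * (1 - p) ^ (n - k)
      = p ^ k * (1 - p) ^ (n - k) * (n.choose k : ℝ) := by ring
    _ ≤ ∑ m ∈ Finset.range (n + 1), p ^ m * (1 - p) ^ (n - m) * (n.choose m : ℝ) :=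
      Finset.single_le_sum hterms (Finset.mem_range.mpr (Nat.lt_succ_of_le hkn))
    _ = 1 := by rw [← add_pow, add_sub_cancel, one_pow]

lemma ite_choose_mul_pow_eq_descFactorial_mul_pow (a ρ s : ℝ) (y n : ℕ) :
    (if y ≤ n then a * (n.choose y : ℝ) * ρ ^ y * (1 - ρ) ^ (n - y) else 0) * s ^ n =
      (s * ρ) ^ y / (y ! : ℝ) * (a * (n.descFactorial y * (s * (1 - ρ)) ^ (n - y))) := by
  split_ifs with hyn
  · rw [Nat.descFactorial_eq_factorial_mul_choose, ← Nat.add_sub_cancel' hyn]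
    have : (y ! : ℝ) ≠ 0 := by positivity
    simp only [Nat.add_sub_cancel_left, Nat.cast_mul, pow_add, mul_pow]
    field_simp
  · simp [Nat.descFactorial_eq_zero_iff_lt.mpr (not_le.mp hyn)]

/-- Evidence step of the PGF forward algorithm: if `α(n) = γ(n)·C(n,y)·ρʸ·(1−ρ)^{n−y}`
(for `n ≥ y`, zero otherwise), then `α` is summable and its PGF satisfies
`Σ α(n) sⁿ = ((s·ρ)ʸ / y!) · Γ^{(y)}(s·(1−ρ))` for all `s ∈ [0,1]`. -/
theorem pgf_evidence_step (γ : ℕ → ℝ) (hnn : ∀ n, 0 ≤ γ n) (hsum : Summable γ)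
    (Γ : ℝ → ℝ) (hΓ : ∀ u, Γ u = ∑' n : ℕ, γ n * u ^ n)
    (y : ℕ) (ρ : ℝ) (hρ : ρ ∈ Set.Ioo (0 : ℝ) 1)
    (α : ℕ → ℝ)
    (hα : ∀ n, α n =
      if y ≤ n then γ n * (n.choose y : ℝ) * ρ ^ y * (1 - ρ) ^ (n - y) else 0) :
    Summable α ∧
    ∀ s ∈ Set.Icc (0 : ℝ) 1,
      ∑' n : ℕ, α n * s ^ n =
        (s * ρ) ^ y / (y ! : ℝ) * iteratedDeriv y Γ (s * (1 - ρ)) := by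
  obtain ⟨hρ0, hρ1⟩ := hρ
  have hα_nonneg : ∀ n, 0 ≤ α n := fun n => by
    rw [hα]
    split_ifs
    · have := hnn n
      have : 0 ≤ 1 - ρ := by linarith
      positivity
    · rfl
  have hα_le : ∀ n, α n ≤ γ n := fun n => by
    rw [hα]
    split_ifs
    · simpa only [mul_assoc] using mul_le_of_le_one_right (hnn n)
        (choose_mul_pow_mul_one_sub_pow_le_one hρ0.le hρ1.le n y)
    · exact hnn n
  refine ⟨hsum.of_nonneg_of_le hα_nonneg hα_le, fun s ⟨hs0, hs1⟩ => ?_⟩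
  have hγ_bdd : ∀ n, ‖γ n‖ ≤ ∑' m, γ m := fun n => by
    rw [Real.norm_of_nonneg (hnn n)]
    exact hsum.le_tsum n fun m _ => hnn m
  have hx : ‖s * (1 - ρ)‖ < 1 := by
    rw [Real.norm_of_nonneg (by nlinarith)]
    nlinarith
  rw [funext hΓ, iteratedDeriv_tsum_mul_pow hγ_bdd y hx, ← tsum_mul_left]
  exact tsum_congr fun n => by rw [hα, ite_choose_mul_pow_eq_descFactorial_mul_pow]
end

section
/- Let μ, ν : ℕ → ℝ be probability mass functions (nonnegative, summing to 1) with PGFs F(u) = Σ_j μ(j) u^j and G(u) = Σ_l ν(l) u^l. Fix K ∈ ℕ, observations y_1, …, y_K ∈ ℕ, and detection probabilities ρ_1, …, ρ_K ∈ (0, 1). Define sequences recursively: α_0(n) = 1 if n = 0 and 0 otherwise; for k = 1, …, K: γ_k(n) = Σ_{m=0}^∞ α_{k−1}(m) · (μ^{∗m} ∗ ν)(n), and α_k(n) = C(n, y_k) · ρ_k^{y_k} · (1−ρ_k)^{n−y_k} · γ_k(n) for n ≥ y_k, with α_k(n) = 0 for n < y_k. Then every γ_k and α_k is nonnegative and summable,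 and, denoting A_k(s) = Σ_n α_k(n) s^n and Γ_k(u) = Σ_n γ_k(n) u^n, for every k ∈ {1, …, K}: (i) Γ_k(u) = A_{k−1}(F(u)) · G(u) for all u ∈ [0, 1], and (ii) A_k(s) = ((s·ρ_k)^{y_k} / y_k!) · Γ_k^{(y_k)}(s·(1−ρ_k)) for all s ∈ [0, 1], where Γ_k^{(y_k)} denotes the y_k-th derivative of Γ_k. -/
/-! The PGF of a convolution is the product of the PGFs (Cauchy product), so `μ^{∗m} ∗ ν` has
PGF `F^m G`, and summing against `α_{k−1}` gives (i); the double series has nonnegative terms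
for `u ∈ [0, 1]`, so the two summations may be exchanged. For (ii), termwise differentiation
inside the unit disc gives `Γ^{(y)}(t) = Σₙ (n+y)!/n! · γ(n+y) tⁿ`, and since
`C(n+y, y) = (n+y)!/(y! n!)` the shift `n ↦ n + y` turns `A_k(s)` into exactly this series at
`t = s(1−ρ)`. Nonnegativity and summability propagate along the recursion because the
binomial weights lie in `[0, 1]` and `F(u) ∈ [0, 1]`. -/

open scoped Nat

/-- Convolution of two sequences: `(a ∗ b)(n) = Σ_{j=0}^{n} a(j) b(n−j)`. -/
noncomputable def seqConv (a b : ℕ → ℝ) (n : ℕ) : ℝ :=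
  ∑ j ∈ Finset.range (n + 1), a j * b (n - j)

/-- `m`-fold convolution power: `μ^{∗0} = δ₀` and `μ^{∗(m+1)} = μ^{∗m} ∗ μ`. -/
noncomputable def convPow (μ : ℕ → ℝ) : ℕ → ℕ → ℝ
  | 0 => fun n => if n = 0 then 1 else 0
  | m + 1 => seqConv (convPow μ m) μ

/-- Forward messages of the integer HMM: `(fwd μ ν y ρ k).1 = α_k` and
`(fwd μ ν y ρ k).2 = γ_k` (the second component at `k = 0` is a dummy).
`α₀ = δ₀`; `γ_k(n) = Σₘ α_{k−1}(m) (μ^{∗m} ∗ ν)(n)`; and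
`α_k(n) = C(n, y_k) ρ_k^{y_k} (1−ρ_k)^{n−y_k} γ_k(n)` for `n ≥ y_k`, else `0`. -/
noncomputable def fwd (μ ν : ℕ → ℝ) (y : ℕ → ℕ) (ρ : ℕ → ℝ) : ℕ → (ℕ → ℝ) × (ℕ → ℝ)
  | 0 => (fun n => if n = 0 then 1 else 0, fun _ => 0)
  | k + 1 =>
    let γ : ℕ → ℝ := fun n => ∑' m : ℕ, (fwd μ ν y ρ k).1 m * seqConv (convPow μ m) ν n
    (fun n =>
      if y (k + 1) ≤ n then
        (n.choose (y (k + 1)) : ℝ) * ρ (k + 1) ^ (y (k + 1)) *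
          (1 - ρ (k + 1)) ^ (n - y (k + 1)) * γ n
      else 0,
     γ)

open Finset

noncomputable def pgf (a : ℕ → ℝ) (u : ℝ) : ℝ := ∑' n, a n * u ^ n

lemma summable_of_tsum_ne_zero {ι : Type*} {f : ι → ℝ} (h : ∑' i, f i ≠ 0) : Summable f :=
  by_contra fun hf => h (tsum_eq_zero_of_not_summable hf)

lemma Summable.mul_pow_of_abs_le_one {a : ℕ → ℝ} (ha : Summable a) {u : ℝ} (hu : |u| ≤ 1) :
    Summable fun n => a n * u ^ n :=
  ha.abs.of_norm_bounded fun n => by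
    rw [Real.norm_eq_abs, abs_mul, abs_pow]
    exact mul_le_of_le_one_right (abs_nonneg _) (pow_le_one₀ (abs_nonneg u) hu)

lemma abs_pgf_le {a : ℕ → ℝ} (ha : Summable a) {u : ℝ} (hu : |u| ≤ 1) :
    |pgf a u| ≤ ∑' n, |a n| := by
  have hau := (ha.mul_pow_of_abs_le_one hu).norm
  refine (norm_tsum_le_tsum_norm hau).trans (hau.tsum_le_tsum (fun n => ?_) ha.abs)
  rw [Real.norm_eq_abs, abs_mul, abs_pow]
  exact mul_le_of_le_one_right (abs_nonneg _) (pow_le_one₀ (abs_nonneg u) hu)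

section Convolution

variable {a b : ℕ → ℝ}

lemma seqConv_nonneg (ha : 0 ≤ a) (hb : 0 ≤ b) : 0 ≤ seqConv a b :=
  fun n => sum_nonneg fun j _ => mul_nonneg (ha j) (hb (n - j))

lemma seqConv_mul_pow (a b : ℕ → ℝ) (u : ℝ) (n : ℕ) :
    seqConv a b n * u ^ n = ∑ j ∈ range (n + 1), a j * u ^ j * (b (n - j) * u ^ (n - j)) := by
  rw [seqConv, sum_mul]
  refine sum_congr rfl fun j hj => ?_
  rw [mul_mul_mul_comm, ← pow_add, Nat.add_sub_cancel' (Nat.lt_succ_iff.mp (mem_range.mp hj))]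

lemma hasSum_seqConv_mul_pow (ha : Summable a) (hb : Summable b) {u : ℝ} (hu : |u| ≤ 1) :
    HasSum (fun n => seqConv a b n * u ^ n) (pgf a u * pgf b u) := by
  simp_rw [seqConv_mul_pow]
  exact hasSum_sum_range_mul_of_summable_norm (f := fun n => a n * u ^ n)
    (g := fun n => b n * u ^ n) (ha.mul_pow_of_abs_le_one hu).norm
    (hb.mul_pow_of_abs_le_one hu).norm

lemma summable_seqConv (ha : Summable a) (hb : Summable b) : Summable (seqConv a b) := by
  simpa using (hasSum_seqConv_mul_pow ha hb (u := 1) (by simp)).summable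

end Convolution

section ConvolutionPower

variable {μ : ℕ → ℝ}

lemma convPow_nonneg (hμ : 0 ≤ μ) : ∀ m, 0 ≤ convPow μ m
  | 0 => fun n => by simp only [convPow]; split <;> norm_num
  | m + 1 => seqConv_nonneg (convPow_nonneg hμ m) hμ

lemma summable_convPow (hμ : Summable μ) : ∀ m, Summable (convPow μ m)
  | 0 => (hasSum_ite_eq 0 1).summable
  | m + 1 => summable_seqConv (summable_convPow hμ m) hμ

lemma pgf_convPow (hμ : Summable μ) {u : ℝ} (hu : |u| ≤ 1) : ∀ m, pgf (convPow μ m) u = pgf μ u ^ m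
  | 0 => by simp [pgf, convPow]
  | m + 1 => by
    rw [pow_succ, ← pgf_convPow hμ hu m]
    exact (hasSum_seqConv_mul_pow (summable_convPow hμ m) hμ hu).tsum_eq

end ConvolutionPower

lemma HasSum.tsum_swap_of_nonneg {β γ : Type*} {f : β → γ → ℝ} (hf : ∀ b c, 0 ≤ f b c)
    {g : β → ℝ} {a : ℝ} (hrow : ∀ b, HasSum (f b) (g b)) (hg : HasSum g a) :
    HasSum (fun c => ∑' b, f b c) a := by
  have hrowsum : (fun b => ∑' c, f b c) = g := funext fun b => (hrow b).tsum_eq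
  have hs : Summable (Function.uncurry f) :=
    (summable_prod_of_nonneg fun p => hf p.1 p.2).2
      ⟨fun b => (hrow b).summable, hrowsum ▸ hg.summable⟩
  have htot : HasSum (Function.uncurry f) a :=
    hg.unique (hs.hasSum.prod_fiberwise hrow) ▸ hs.hasSum
  exact ((Equiv.prodComm γ β).hasSum_iff.2 htot).prod_fiberwise fun c =>
    (hs.prod_symm.prod_factor c).hasSum

noncomputable def predict (μ ν α : ℕ → ℝ) (n : ℕ) : ℝ :=
  ∑' m, α m * seqConv (convPow μ m) ν n

section Predict

variable {μ ν α : ℕ → ℝ}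

lemma predict_nonneg (hμ : 0 ≤ μ) (hν : 0 ≤ ν) (hα : 0 ≤ α) : 0 ≤ predict μ ν α :=
  fun n => tsum_nonneg fun m => mul_nonneg (hα m) (seqConv_nonneg (convPow_nonneg hμ m) hν n)

lemma hasSum_predict_mul_pow (hμ : 0 ≤ μ) (hμs : Summable μ) (hμ1 : ∑' n, μ n ≤ 1)
    (hν : 0 ≤ ν) (hνs : Summable ν) (hα : 0 ≤ α) (hαs : Summable α) {u : ℝ} (hu : u ∈ Set.Icc 0 1) :
    HasSum (fun n => predict μ ν α n * u ^ n) (pgf α (pgf μ u) * pgf ν u) := by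
  have hu' : |u| ≤ 1 := (abs_of_nonneg hu.1).trans_le hu.2
  have hF : |pgf μ u| ≤ 1 := by
    have h := abs_pgf_le hμs hu'
    simp only [abs_of_nonneg (hμ _)] at h
    exact h.trans hμ1
  have hrow : ∀ m, HasSum (fun n => α m * (seqConv (convPow μ m) ν n * u ^ n))
      (α m * pgf μ u ^ m * pgf ν u) := fun m => by
    rw [mul_assoc, ← pgf_convPow hμs hu' m]
    exact (hasSum_seqConv_mul_pow (summable_convPow hμs m) hνs hu').mul_left (α m)
  have hrowsums : HasSum (fun m => α m * pgf μ u ^ m * pgf ν u) (pgf α (pgf μ u) * pgf ν u) :=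
    (hαs.mul_pow_of_abs_le_one hF).hasSum.mul_right _
  have hswap := HasSum.tsum_swap_of_nonneg (fun m n => mul_nonneg (hα m)
    (mul_nonneg (seqConv_nonneg (convPow_nonneg hμ m) hν n) (pow_nonneg hu.1 n))) hrow hrowsums
  simpa only [predict, ← tsum_mul_right, mul_assoc] using hswap

lemma summable_predict (hμ : 0 ≤ μ) (hμs : Summable μ) (hμ1 : ∑' n, μ n ≤ 1)
    (hν : 0 ≤ ν) (hνs : Summable ν) (hα : 0 ≤ α) (hαs : Summable α) : Summable (predict μ ν α) := by
  simpa using (hasSum_predict_mul_pow hμ hμs hμ1 hν hνs hα hαs (u := 1) (by simp)).summable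

end Predict

noncomputable def observe (y : ℕ) (ρ : ℝ) (γ : ℕ → ℝ) (n : ℕ) : ℝ :=
  if y ≤ n then (n.choose y : ℝ) * ρ ^ y * (1 - ρ) ^ (n - y) * γ n else 0

section Observe

variable {ρ : ℝ} {γ : ℕ → ℝ}

lemma choose_mul_pow_mul_pow_le_one (hρ : ρ ∈ Set.Icc (0 : ℝ) 1) {y n : ℕ} (hyn : y ≤ n) :
    (n.choose y : ℝ) * ρ ^ y * (1 - ρ) ^ (n - y) ≤ 1 := by
  have hρ' : 0 ≤ 1 - ρ := sub_nonneg.2 hρ.2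
  calc (n.choose y : ℝ) * ρ ^ y * (1 - ρ) ^ (n - y)
      = ρ ^ y * (1 - ρ) ^ (n - y) * n.choose y := by ring
    _ ≤ ∑ k ∈ range (n + 1), ρ ^ k * (1 - ρ) ^ (n - k) * n.choose k :=
      single_le_sum (f := fun k => ρ ^ k * (1 - ρ) ^ (n - k) * n.choose k)
        (fun k _ => mul_nonneg (mul_nonneg (pow_nonneg hρ.1 _) (pow_nonneg hρ' _))
          (Nat.cast_nonneg _)) (mem_range.2 (Nat.lt_succ_of_le hyn))
    _ = 1 := by rw [← add_pow, add_sub_cancel, one_pow]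

lemma observe_nonneg (hρ : ρ ∈ Set.Icc (0 : ℝ) 1) (hγ : 0 ≤ γ) (y : ℕ) : 0 ≤ observe y ρ γ := by
  have hρ' : 0 ≤ 1 - ρ := sub_nonneg.2 hρ.2
  intro n
  unfold observe
  split
  · exact mul_nonneg (mul_nonneg (mul_nonneg (Nat.cast_nonneg _) (pow_nonneg hρ.1 _))
      (pow_nonneg hρ' _)) (hγ n)
  · exact le_rfl

lemma observe_le (hρ : ρ ∈ Set.Icc (0 : ℝ) 1) (hγ : 0 ≤ γ) (y : ℕ) : observe y ρ γ ≤ γ := by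
  intro n
  unfold observe
  split
  · next hyn => exact mul_le_of_le_one_left (hγ n) (choose_mul_pow_mul_pow_le_one hρ hyn)
  · exact hγ n

end Observe

lemma pgf_observe (y : ℕ) (ρ : ℝ) (γ : ℕ → ℝ) (s : ℝ) :
    pgf (observe y ρ γ) s =
      (s * ρ) ^ y / y ! *
        pgf (fun n => ((n + y).descFactorial y : ℝ) * γ (n + y)) (s * (1 - ρ)) := by
  have hsupp : Function.support (fun n => observe y ρ γ n * s ^ n) ⊆ Set.range (· + y) :=
    fun n hn => ⟨n - y, Nat.sub_add_cancel (not_lt.1 fun h => hn (by simp [observe, h.not_ge]))⟩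
  rw [pgf, ← (add_left_injective y).tsum_eq hsupp, pgf, ← tsum_mul_left]
  refine tsum_congr fun n => ?_
  rw [observe, if_pos (Nat.le_add_left y n), Nat.add_sub_cancel,
    Nat.descFactorial_eq_factorial_mul_choose]
  have : (y ! : ℝ) ≠ 0 := by positivity
  push_cast
  rw [mul_pow, mul_pow, pow_add]
  field_simp

def derivCoeff (c : ℕ → ℝ) (n : ℕ) : ℝ := (n + 1) * c (n + 1)

section PowerSeries

open Metric Filter Topology

variable {c : ℕ → ℝ}

lemma summable_derivCoeff_mul_pow (hc : ∀ x : ℝ, |x| < 1 → Summable fun n => c n * x ^ n)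
    {x : ℝ} (hx : |x| < 1) : Summable fun n => derivCoeff c n * x ^ n := by
  obtain ⟨s, hxs, hs1⟩ := exists_between hx
  have hs0 : 0 < s := (abs_nonneg x).trans_lt hxs
  have hq : ‖|x| / s‖ < 1 := by
    rwa [Real.norm_eq_abs, abs_of_nonneg (by positivity), div_lt_one hs0]
  have hB : ∀ n, |c n| * s ^ n ≤ ∑' n, |c n * s ^ n| := fun n => by
    simpa [abs_mul, abs_of_pos hs0] using
      (hc s (by rwa [abs_of_pos hs0])).abs.le_tsum n fun _ _ => abs_nonneg _
  have hgeom : Summable fun n : ℕ => ((n : ℝ) + 1) * (|x| / s) ^ n := by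
    simpa [add_mul] using
      (summable_pow_mul_geometric_of_norm_lt_one 1 hq).add (summable_geometric_of_norm_lt_one hq)
  -- `(n + 1) |x| ^ n = (n + 1) (|x| / s) ^ n * s ^ n`, and `|c n| s ^ n` is bounded
  refine (hgeom.mul_left ((∑' n, |c n * s ^ n|) / s)).of_norm_bounded fun n => ?_
  calc ‖derivCoeff c n * x ^ n‖
      = |c (n + 1)| * s ^ (n + 1) * (((n : ℝ) + 1) * (|x| / s) ^ n) / s := by
        rw [derivCoeff, Real.norm_eq_abs, abs_mul, abs_mul, abs_pow, div_pow,
          abs_of_nonneg (by positivity : (0 : ℝ) ≤ n + 1)]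
        field_simp
        ring
    _ ≤ (∑' n, |c n * s ^ n|) * (((n : ℝ) + 1) * (|x| / s) ^ n) / s := by
        gcongr
        exact hB (n + 1)
    _ = _ := by ring

lemma hasDerivAt_pgf (hc : ∀ x : ℝ, |x| < 1 → Summable fun n => c n * x ^ n)
    {x : ℝ} (hx : |x| < 1) : HasDerivAt (pgf c) (pgf (derivCoeff c) x) x := by
  obtain ⟨r, hxr, hr1⟩ := exists_between hx
  have hr0 : 0 < r := (abs_nonneg x).trans_lt hxr
  have hsplit : pgf c =ᶠ[𝓝 x] fun t => c 0 + ∑' n, c (n + 1) * t ^ (n + 1) := by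
    filter_upwards [continuous_abs.continuousAt.eventually_lt continuousAt_const hx] with t ht
    rw [pgf, (hc t ht).tsum_eq_zero_add, pow_zero, mul_one]
  -- after splitting off `c 0`, the termwise derivatives are exactly `derivCoeff c n * t ^ n`
  refine (HasDerivAt.const_add _ ?_).congr_of_eventuallyEq hsplit
  refine hasDerivAt_tsum_of_isPreconnected (g := fun n t => c (n + 1) * t ^ (n + 1))
    (g' := fun n t => derivCoeff c n * t ^ n)
    (summable_derivCoeff_mul_pow hc (by rwa [abs_of_pos hr0])).abs isOpen_ball
    (convex_ball 0 r).isPreconnected (fun n t _ => ?_) (fun n t ht => ?_) (mem_ball_self hr0)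
    (by simp) (by rwa [mem_ball_zero_iff, Real.norm_eq_abs])
  · refine ((hasDerivAt_pow (n + 1) t).const_mul (c (n + 1))).congr_deriv ?_
    rw [derivCoeff]
    push_cast
    ring
  · rw [mem_ball_zero_iff, Real.norm_eq_abs] at ht
    rw [Real.norm_eq_abs, abs_mul, abs_mul, abs_pow, abs_pow, abs_of_pos hr0]
    gcongr

lemma iteratedDeriv_pgf (hc : ∀ x : ℝ, |x| < 1 → Summable fun n => c n * x ^ n)
    (k : ℕ) {x : ℝ} (hx : |x| < 1) :
    iteratedDeriv k (pgf c) x = pgf (fun n => ((n + k).descFactorial k : ℝ) * c (n + k)) x := by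
  induction k generalizing c with
  | zero => simp
  | succ k ih =>
    have hderiv : deriv (pgf c) =ᶠ[𝓝 x] pgf (derivCoeff c) := by
      filter_upwards [continuous_abs.continuousAt.eventually_lt continuousAt_const hx] with t ht
      exact (hasDerivAt_pgf hc ht).deriv
    rw [iteratedDeriv_succ', hderiv.iteratedDeriv_eq,
      ih fun t ht => summable_derivCoeff_mul_pow hc ht]
    congr 1
    funext n
    rw [derivCoeff, ← add_assoc, Nat.succ_descFactorial_succ]
    push_cast
    ring

end PowerSeries

section Forward

variable {μ ν : ℕ → ℝ} {y : ℕ → ℕ} {ρ : ℕ → ℝ}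

lemma fwd_fst_nonneg_summable (hμ : 0 ≤ μ) (hμs : Summable μ) (hμ1 : ∑' n, μ n ≤ 1)
    (hν : 0 ≤ ν) (hνs : Summable ν) {K : ℕ} (hρ : ∀ k, 1 ≤ k → k ≤ K → ρ k ∈ Set.Icc (0 : ℝ) 1) :
    ∀ k ≤ K, 0 ≤ (fwd μ ν y ρ k).1 ∧ Summable (fwd μ ν y ρ k).1
  | 0, _ => ⟨fun n => by simp only [fwd]; split <;> norm_num, (hasSum_ite_eq 0 1).summable⟩
  | k + 1, hk => by
    obtain ⟨hα, hαs⟩ := fwd_fst_nonneg_summable hμ hμs hμ1 hν hνs hρ k (by omega)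
    have hγ := predict_nonneg hμ hν hα
    have hρk := hρ (k + 1) (by omega) hk
    exact ⟨observe_nonneg hρk hγ _, .of_nonneg_of_le (observe_nonneg hρk hγ _)
      (observe_le hρk hγ _) (summable_predict hμ hμs hμ1 hν hνs hα hαs)⟩

end Forward

/-- The PGF forward recursion (Proposition 1): all messages are nonnegative and
summable, and for `1 ≤ k ≤ K`:
(i) `Γ_k(u) = A_{k−1}(F(u)) · G(u)` for `u ∈ [0,1]`, and
(ii) `A_k(s) = ((sρ_k)^{y_k}/y_k!) · Γ_k^{(y_k)}(s(1−ρ_k))` for `s ∈ [0,1]`. -/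
theorem pgf_forward_recursion
    (μ : ℕ → ℝ) (hμnn : ∀ j, 0 ≤ μ j) (hμsum : ∑' j : ℕ, μ j = 1)
    (ν : ℕ → ℝ) (hνnn : ∀ l, 0 ≤ ν l) (hνsum : ∑' l : ℕ, ν l = 1)
    (F : ℝ → ℝ) (hF : ∀ u, F u = ∑' j : ℕ, μ j * u ^ j)
    (G : ℝ → ℝ) (hG : ∀ u, G u = ∑' l : ℕ, ν l * u ^ l)
    (K : ℕ) (y : ℕ → ℕ) (ρ : ℕ → ℝ)
    (hρ : ∀ k, 1 ≤ k → k ≤ K → ρ k ∈ Set.Ioo (0 : ℝ) 1) :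
    (∀ k ≤ K, (∀ n, 0 ≤ (fwd μ ν y ρ k).1 n) ∧ Summable (fwd μ ν y ρ k).1) ∧
    (∀ k, 1 ≤ k → k ≤ K →
      (∀ n, 0 ≤ (fwd μ ν y ρ k).2 n) ∧ Summable (fwd μ ν y ρ k).2 ∧
      (∀ u ∈ Set.Icc (0 : ℝ) 1,
        ∑' n : ℕ, (fwd μ ν y ρ k).2 n * u ^ n =
          (∑' m : ℕ, (fwd μ ν y ρ (k - 1)).1 m * (F u) ^ m) * G u) ∧
      (∀ s ∈ Set.Icc (0 : ℝ) 1,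
        ∑' n : ℕ, (fwd μ ν y ρ k).1 n * s ^ n =
          (s * ρ k) ^ (y k) / ((y k)! : ℝ) *
            iteratedDeriv (y k)
              (fun u => ∑' n : ℕ, (fwd μ ν y ρ k).2 n * u ^ n)
              (s * (1 - ρ k)))) := by
  have hμs : Summable μ := summable_of_tsum_ne_zero (by rw [hμsum]; exact one_ne_zero)
  have hνs : Summable ν := summable_of_tsum_ne_zero (by rw [hνsum]; exact one_ne_zero)
  have hα := fwd_fst_nonneg_summable (y := y) hμnn hμs hμsum.le hνnn hνs
    fun k h1 h2 => Set.Ioo_subset_Icc_self (hρ k h1 h2)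
  refine ⟨hα, fun k hk1 hkK => ?_⟩
  obtain ⟨k, rfl⟩ := Nat.exists_eq_add_of_le' hk1
  obtain ⟨hαk, hαks⟩ := hα k (by omega)
  obtain ⟨hρ0, hρ1⟩ := hρ (k + 1) hk1 hkK
  have hγs := summable_predict hμnn hμs hμsum.le hνnn hνs hαk hαks
  refine ⟨predict_nonneg hμnn hνnn hαk, hγs, fun u hu => ?_, fun s hs => ?_⟩
  · rw [hF, hG, Nat.add_sub_cancel]
    exact (hasSum_predict_mul_pow hμnn hμs hμsum.le hνnn hνs hαk hαks hu).tsum_eq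
  · have hx : |s * (1 - ρ (k + 1))| < 1 := by
      rw [abs_of_nonneg (mul_nonneg hs.1 (by linarith))]
      nlinarith [hs.1, hs.2]
    show pgf (fwd μ ν y ρ (k + 1)).1 s = _ * iteratedDeriv _ (pgf (fwd μ ν y ρ (k + 1)).2) _
    rw [iteratedDeriv_pgf (c := (fwd μ ν y ρ (k + 1)).2)
      (fun x hx => hγs.mul_pow_of_abs_le_one hx.le) _ hx]
    exact pgf_observe _ _ _ _
end
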